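/- arXiv:1506.02340 — 3 statements merged into one kernel-verified Lean document; each statement's English description precedes it below -/
import Mathlib

section
/- Let r ≠ 0 be real and define G(x,y) = (1/r) log(1 + (e^{rx}−1)(e^{ry}−1)/(e^r−1)) for (x,y) ∈ [0,1]². Then: (i) G(x,0) = 0, G(0,y) = 0, G(x,1) = x, and G(1,y) = y for all x, y ∈ [0,1]; (ii) the mixed partial derivative ∂²G/∂x∂y(x,y) equals g(x,y) = r(1−e^{−r}) / (e^{r(1−x−y)/2} − e^{r(x−y−1)/2} − e^{r(y−x−1)/2} + e^{r(x+y−1)/2})², and g(x,y) > 0 on (0,1)²; (iii) G satisfies the differential equation ∂G/∂x(x,y) = (1 − e^{−r G(x,y)})/(1 − e^{−rx}) for x ∈ (0,1]. Consequently the measure with density g is a permuton. -/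
open MeasureTheory Real Set Filter
open scoped Classical ENNReal

noncomputable section

/-- A *permuton* is a Borel probability measure on `[0,1]²` (viewed as a measure on `ℝ × ℝ`)
both of whose coordinate marginals are Lebesgue measure on `[0,1]`. -/
def IsPermuton (γ : Measure (ℝ × ℝ)) : Prop :=
  IsProbabilityMeasure γ ∧
    γ.map Prod.fst = volume.restrict (Icc (0 : ℝ) 1) ∧
    γ.map Prod.snd = volume.restrict (Icc (0 : ℝ) 1)

/-- The entropy `H(γ) = ∫ -g log g` of a measure on `ℝ × ℝ`, taking the value `⊥ = -∞`
if `γ` is not absolutely continuous (w.r.t. Lebesgue measure) with density `g` such that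
`g log g` is integrable. -/
def permutonEntropy (γ : Measure (ℝ × ℝ)) : EReal :=
  if (γ ≪ volume) ∧
      Integrable (fun p => (γ.rnDeriv volume p).toReal * Real.log (γ.rnDeriv volume p).toReal)
        volume then
    (((∫ p, -((γ.rnDeriv volume p).toReal * Real.log (γ.rnDeriv volume p).toReal)) : ℝ) : EReal)
  else ⊥

/-- The rectangle distance `d_□` between two measures on `ℝ × ℝ`: the supremum over
axis-aligned rectangles `R` of `|γ₁(R) - γ₂(R)|`. -/
def permutonDist (γ₁ γ₂ : Measure (ℝ × ℝ)) : ℝ :=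
  ⨆ R : ℝ × ℝ × ℝ × ℝ,
    |(γ₁ (Icc R.1 R.2.1 ×ˢ Icc R.2.2.1 R.2.2.2)).toReal -
      (γ₂ (Icc R.1 R.2.1 ×ˢ Icc R.2.2.1 R.2.2.2)).toReal|

/-- The half-open grid cell `(i/m, (i+1)/m] × (j/m, (j+1)/m]` (0-indexed version of `Q_{ij}`). -/
def gridCell (m i j : ℕ) : Set (ℝ × ℝ) :=
  Ioc ((i : ℝ) / m) ((i + 1 : ℝ) / m) ×ˢ Ioc ((j : ℝ) / m) ((j + 1 : ℝ) / m)

/-- The permuton `γ_π` associated to a permutation `π ∈ S_n`: density `n` on each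
grid square `(i/n,(i+1)/n] × (π(i)/n,(π(i)+1)/n]`, and `0` elsewhere. -/
def permutationPermuton (n : ℕ) (σp : Equiv.Perm (Fin n)) : Measure (ℝ × ℝ) :=
  volume.withDensity fun p =>
    ∑ i : Fin n, (gridCell n i (σp i)).indicator (fun _ => (n : ℝ≥0∞)) p

/-- The number of permutations of `Fin n` satisfying a predicate. -/
def permCount (n : ℕ) (P : Equiv.Perm (Fin n) → Prop) : ℕ :=
  Nat.card {σp : Equiv.Perm (Fin n) // P σp}

/-- `(1/n) log (c / n!)`, as an extended real, with value `⊥ = -∞` when `c = 0`. -/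
def normLog (n c : ℕ) : EReal :=
  if c = 0 then ⊥ else ((Real.log ((c : ℝ) / (n.factorial : ℝ)) / n : ℝ) : EReal)

/-- The event that `m` points of `ℝ × ℝ`, when reindexed in increasing order of `x`-coordinate,
have `y`-coordinates in the relative order given by the pattern `τ`. -/
def patternEvent {m : ℕ} (τ : Equiv.Perm (Fin m)) : Set (Fin m → ℝ × ℝ) :=
  {p | ∃ σ : Equiv.Perm (Fin m),
        StrictMono (fun i => (p (σ i)).1) ∧
        ∀ i j : Fin m, i < j → ((p (σ i)).2 < (p (σ j)).2 ↔ τ i < τ j)}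

/-- The density `ρ_τ(γ)` of the pattern `τ ∈ S_m` in the measure `γ`: the probability that
`m` points drawn independently from `γ` induce the pattern `τ`. -/
def patternDensity {m : ℕ} (τ : Equiv.Perm (Fin m)) (γ : Measure (ℝ × ℝ)) : ℝ :=
  ((Measure.pi fun _ : Fin m => γ) (patternEvent τ)).toReal

end

/-- The CDF of the entropy-maximizing permuton with fixed `12`-pattern density:
`G(x,y) = (1/r) log (1 + (e^{rx}-1)(e^{ry}-1)/(e^r-1))`. -/
noncomputable def G12 (r x y : ℝ) : ℝ :=
  (1 / r) * Real.log (1 + (Real.exp (r * x) - 1) * (Real.exp (r * y) - 1) / (Real.exp r - 1))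

/-- The density of the entropy-maximizing permuton with fixed `12`-pattern density. -/
noncomputable def g12 (r x y : ℝ) : ℝ :=
  r * (1 - Real.exp (-r)) /
    (Real.exp (r * (1 - x - y) / 2) - Real.exp (r * (x - y - 1) / 2) -
        Real.exp (r * (y - x - 1) / 2) + Real.exp (r * (x + y - 1) / 2)) ^ 2

section G12Aux

noncomputable def S12 (r x y : ℝ) : ℝ :=
  Real.exp (r*(x+y)) - Real.exp (r*x) - Real.exp (r*y) + Real.exp r

variable {r x y : ℝ}

lemma t_mem (hr : r ≠ 0) (hy : y ∈ Icc (0:ℝ) 1) :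
    (Real.exp (r*y) - 1) / (Real.exp r - 1) ∈ Icc (0:ℝ) 1 := by
  obtain ⟨hy0, hy1⟩ := hy
  rcases hr.lt_or_gt with h | h
  · have h1 : Real.exp r - 1 < 0 := by
      have := Real.exp_lt_one_iff.mpr h; linarith
    have h2 : Real.exp (r*y) - 1 ≤ 0 := by
      have hh : r * y ≤ 0 := mul_nonpos_of_nonpos_of_nonneg h.le hy0
      have := Real.exp_le_one_iff.mpr hh; linarith
    have h3 : Real.exp r - 1 ≤ Real.exp (r*y) - 1 := by
      have hh : r ≤ r * y := by nlinarith
      have := Real.exp_le_exp.mpr hh; linarith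
    refine ⟨div_nonneg_of_nonpos h2 h1.le, ?_⟩
    rw [div_le_one_iff]
    right; right; exact ⟨h1, h3⟩
  · have h1 : (0:ℝ) < Real.exp r - 1 := by
      have := Real.one_lt_exp_iff.mpr h; linarith
    have h2 : 0 ≤ Real.exp (r*y) - 1 := by
      have := Real.one_le_exp (mul_nonneg h.le hy0); linarith
    have h3 : Real.exp (r*y) - 1 ≤ Real.exp r - 1 := by
      have hh : r * y ≤ r := by nlinarith
      have := Real.exp_le_exp.mpr hh; linarith
    exact ⟨div_nonneg h2 h1.le, (div_le_one h1).mpr h3⟩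

lemma inner_pos (hr : r ≠ 0) (hy : y ∈ Icc (0:ℝ) 1) (x : ℝ) :
    0 < 1 + (Real.exp (r*x) - 1) * (Real.exp (r*y) - 1) / (Real.exp r - 1) := by
  obtain ⟨ht0, ht1⟩ := t_mem hr hy
  have ha : 0 < Real.exp (r*x) := Real.exp_pos _
  rw [mul_div_assoc]
  set t := (Real.exp (r*y) - 1) / (Real.exp r - 1)
  nlinarith [mul_nonneg ht0 ha.le]

lemma inner_pos' (hr : r ≠ 0) (hx : x ∈ Icc (0:ℝ) 1) (y : ℝ) :
    0 < 1 + (Real.exp (r*x) - 1) * (Real.exp (r*y) - 1) / (Real.exp r - 1) := by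
  rw [mul_comm]; exact inner_pos hr hx y

lemma expr_ne (hr : r ≠ 0) : Real.exp r - 1 ≠ 0 := by
  rcases hr.lt_or_gt with h | h
  · have := Real.exp_lt_one_iff.mpr h; linarith
  · have := Real.one_lt_exp_iff.mpr h; linarith

lemma S12_eq (hr : r ≠ 0) : S12 r x y =
    (Real.exp r - 1) * (1 + (Real.exp (r*x) - 1) * (Real.exp (r*y) - 1) / (Real.exp r - 1)) := by
  have h := expr_ne (r := r) hr
  have hab : Real.exp (r*(x+y)) = Real.exp (r*x) * Real.exp (r*y) := by
    rw [← Real.exp_add]; ring_nf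
  unfold S12; field_simp; rw [hab]; ring

lemma S12_ne (hr : r ≠ 0) (h : 0 < 1 + (Real.exp (r*x) - 1) * (Real.exp (r*y) - 1) / (Real.exp r - 1)) :
    S12 r x y ≠ 0 := by
  rw [S12_eq hr]; exact mul_ne_zero (expr_ne hr) h.ne'

noncomputable def phi12 (r x y : ℝ) : ℝ :=
  Real.exp (r*x) * (Real.exp (r*y) - 1) / S12 r x y

lemma hasDerivAt_G_x (hr : r ≠ 0)
    (h : 0 < 1 + (Real.exp (r*x) - 1) * (Real.exp (r*y) - 1) / (Real.exp r - 1)) :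
    HasDerivAt (fun x' => G12 r x' y)
      (Real.exp (r*x) * (Real.exp (r*y) - 1) / S12 r x y) x := by
  have h1 : HasDerivAt (fun x' : ℝ => Real.exp (r * x')) (Real.exp (r*x) * r) x := by
    simpa using ((hasDerivAt_id x).const_mul r).exp
  have h2 : HasDerivAt (fun x' : ℝ =>
      1 + (Real.exp (r * x') - 1) * (Real.exp (r*y) - 1) / (Real.exp r - 1))
      (Real.exp (r*x) * r * (Real.exp (r*y) - 1) / (Real.exp r - 1)) x :=
    (((h1.sub_const 1).mul_const _).div_const _).const_add 1
  have h3 := (h2.log h.ne').const_mul (1/r)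
  have hc := expr_ne (r := r) hr
  set I := 1 + (Real.exp (r * x) - 1) * (Real.exp (r*y) - 1) / (Real.exp r - 1) with hI
  have heq : (1/r) * (Real.exp (r*x) * r * (Real.exp (r*y) - 1) / (Real.exp r - 1) / I)
      = Real.exp (r*x) * (Real.exp (r*y) - 1) / S12 r x y := by
    rw [S12_eq hr, ← hI]
    field_simp
  rw [heq] at h3
  exact h3

lemma D_eq : Real.exp (r * (1 - x - y) / 2) - Real.exp (r * (x - y - 1) / 2) -
    Real.exp (r * (y - x - 1) / 2) + Real.exp (r * (x + y - 1) / 2)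
    = Real.exp (-(r*(x+y+1))/2) * S12 r x y := by
  unfold S12
  rw [show r * (1 - x - y) / 2 = -(r*(x+y+1))/2 + r by ring,
      show r * (x - y - 1) / 2 = -(r*(x+y+1))/2 + r*x by ring,
      show r * (y - x - 1) / 2 = -(r*(x+y+1))/2 + r*y by ring,
      show r * (x + y - 1) / 2 = -(r*(x+y+1))/2 + r*(x+y) by ring]
  simp [Real.exp_add]
  ring

lemma g12_eq (hS : S12 r x y ≠ 0) :
    g12 r x y = r * (Real.exp r - 1) * (Real.exp (r*x) * Real.exp (r*y)) / (S12 r x y)^2 := by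
  unfold g12
  rw [D_eq, mul_pow, ← Real.exp_nat_mul]
  have h1 : Real.exp ((2:ℕ) * (-(r*(x+y+1))/2)) = (Real.exp (r*x) * Real.exp (r*y) * Real.exp r)⁻¹ := by
    rw [← Real.exp_add, ← Real.exp_add, ← Real.exp_neg]
    norm_num
    ring_nf
  rw [h1, Real.exp_neg]
  have := Real.exp_ne_zero r
  have := Real.exp_ne_zero (r*x)
  have := Real.exp_ne_zero (r*y)
  field_simp

lemma g12_nonneg : 0 ≤ g12 r x y := by
  unfold g12
  apply div_nonneg _ (sq_nonneg _)
  rcases lt_trichotomy r 0 with h | h | h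
  · have := Real.one_lt_exp_iff.mpr (neg_pos.mpr h)
    nlinarith
  · simp [h]
  · have := Real.exp_lt_one_iff.mpr (neg_neg_iff_pos.mpr h)
    nlinarith

lemma g12_pos (hr : r ≠ 0) (hS : S12 r x y ≠ 0) : 0 < g12 r x y := by
  rw [g12_eq hS]
  apply div_pos _ (by positivity)
  have h1 : 0 < r * (Real.exp r - 1) := by
    rcases hr.lt_or_gt with h | h
    · have := Real.exp_lt_one_iff.mpr h; nlinarith
    · have := Real.one_lt_exp_iff.mpr h; nlinarith
  positivity

lemma hasDerivAt_phi (hr : r ≠ 0) (hS : S12 r x y ≠ 0) :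
    HasDerivAt (fun y' => phi12 r x y') (g12 r x y) y := by
  have hb : HasDerivAt (fun y' : ℝ => Real.exp (r * y')) (Real.exp (r*y) * r) y := by
    simpa using ((hasDerivAt_id y).const_mul r).exp
  have hN : HasDerivAt (fun y' : ℝ => Real.exp (r*x) * (Real.exp (r*y') - 1))
      (Real.exp (r*x) * (Real.exp (r*y) * r)) y := (hb.sub_const 1).const_mul _
  have hs : HasDerivAt (fun y' : ℝ => r * (x + y')) r y := by
    simpa using ((hasDerivAt_id y).const_add x).const_mul r
  have hD : HasDerivAt (fun y' => S12 r x y')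
      (Real.exp (r*(x+y)) * r - Real.exp (r*y) * r) y := by
    have := ((hs.exp.sub_const (Real.exp (r*x))).sub hb).add_const (Real.exp r)
    exact this
  have h := hN.div hD hS
  have hab : Real.exp (r*(x+y)) = Real.exp (r*x) * Real.exp (r*y) := by
    rw [← Real.exp_add]; ring_nf
  have hnum : Real.exp (r*x) * (Real.exp (r*y) * r) * S12 r x y -
      Real.exp (r*x) * (Real.exp (r*y) - 1) * (Real.exp (r*(x+y)) * r - Real.exp (r*y) * r)
      = r * (Real.exp r - 1) * (Real.exp (r*x) * Real.exp (r*y)) := by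
    unfold S12; rw [hab]; ring
  rw [show (fun y' => phi12 r x y') = fun y' =>
      Real.exp (r*x) * (Real.exp (r*y') - 1) / S12 r x y' from rfl] at *
  refine h.congr_deriv ?_
  rw [g12_eq hS, div_eq_div_iff (by positivity) (by positivity), ← hnum]

lemma G12_x0 : G12 r x 0 = 0 := by
  unfold G12; simp

lemma G12_x1 (hr : r ≠ 0) : G12 r x 1 = x := by
  unfold G12
  rw [mul_one, mul_div_assoc, div_self (expr_ne hr), mul_one]
  rw [show 1 + (Real.exp (r*x) - 1) = Real.exp (r*x) by ring, Real.log_exp]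
  field_simp

lemma G12_symm : G12 r x y = G12 r y x := by
  unfold G12; rw [mul_comm (Real.exp (r*x) - 1)]

lemma phi12_0 : phi12 r x 0 = 0 := by unfold phi12; simp

lemma phi12_1 (hr : r ≠ 0) (ha : Real.exp (r*x) ≠ 0) : phi12 r x 1 = 1 := by
  unfold phi12 S12
  rw [mul_one, show r * (x+1) = r*x + r by ring, Real.exp_add]
  rw [show Real.exp (r*x) * Real.exp r - Real.exp (r*x) - Real.exp r + Real.exp r
      = Real.exp (r*x) * (Real.exp r - 1) by ring]
  rw [div_self (mul_ne_zero ha (expr_ne hr))]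

lemma S12_ne_of_x (hr : r ≠ 0) (hx : x ∈ Icc (0:ℝ) 1) (y : ℝ) : S12 r x y ≠ 0 :=
  S12_ne hr (inner_pos' hr hx y)

lemma S12_ne_of_y (hr : r ≠ 0) (hy : y ∈ Icc (0:ℝ) 1) (x : ℝ) : S12 r x y ≠ 0 :=
  S12_ne hr (inner_pos hr hy x)

lemma deriv_G_x (hr : r ≠ 0) (hy : y ∈ Icc (0:ℝ) 1) (x : ℝ) :
    deriv (fun x' => G12 r x' y) x = phi12 r x y :=
  (hasDerivAt_G_x hr (inner_pos hr hy x)).deriv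

lemma deriv_G_x' (hr : r ≠ 0) (hx : x ∈ Icc (0:ℝ) 1) (y : ℝ) :
    deriv (fun x' => G12 r x' y) x = phi12 r x y :=
  (hasDerivAt_G_x hr (inner_pos' hr hx y)).deriv

-- part iii
lemma part3 (hr : r ≠ 0) (hx : x ∈ Ioc (0:ℝ) 1) (hy : y ∈ Icc (0:ℝ) 1) :
    deriv (fun x' => G12 r x' y) x =
      (1 - Real.exp (-r * G12 r x y)) / (1 - Real.exp (-r * x)) := by
  rw [deriv_G_x hr hy x]
  have hI := inner_pos hr hy x
  have hc := expr_ne (r := r) hr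
  have hG : Real.exp (-r * G12 r x y)
      = (1 + (Real.exp (r*x) - 1) * (Real.exp (r*y) - 1) / (Real.exp r - 1))⁻¹ := by
    unfold G12
    rw [show -r * (1/r * Real.log (1 + (Real.exp (r*x) - 1) * (Real.exp (r*y) - 1) / (Real.exp r - 1)))
        = -Real.log (1 + (Real.exp (r*x) - 1) * (Real.exp (r*y) - 1) / (Real.exp r - 1)) by
      field_simp]
    rw [Real.exp_neg, Real.exp_log hI]
  rw [hG, show -r * x = -(r*x) by ring, Real.exp_neg]
  have ha : (1:ℝ) < Real.exp (r*x) ∨ Real.exp (r*x) < 1 := by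
    rcases hr.lt_or_gt with h | h
    · right; exact Real.exp_lt_one_iff.mpr (by nlinarith [hx.1])
    · left; exact Real.one_lt_exp_iff.mpr (by nlinarith [hx.1])
  have ha1 : Real.exp (r*x) - 1 ≠ 0 := by rcases ha with h | h <;> [linarith; linarith]
  have ha0 := Real.exp_ne_zero (r*x)
  unfold phi12
  rw [S12_eq hr]
  set I := 1 + (Real.exp (r * x) - 1) * (Real.exp (r * y) - 1) / (Real.exp r - 1) with hIdef
  have hIne : I ≠ 0 := hI.ne'
  have e2 : I - 1 = (Real.exp (r*x) - 1) * (Real.exp (r*y) - 1) / (Real.exp r - 1) := by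
    rw [hIdef]; ring
  rw [show (1 : ℝ) - I⁻¹ = (I - 1)/I by field_simp, e2,
      show (1:ℝ) - (Real.exp (r*x))⁻¹ = (Real.exp (r*x) - 1)/Real.exp (r*x) by field_simp]
  field_simp

lemma part2 (hr : r ≠ 0) (hx : x ∈ Icc (0:ℝ) 1) (y : ℝ) :
    deriv (fun y' => deriv (fun x' => G12 r x' y') x) y = g12 r x y := by
  have hfun : (fun y' => deriv (fun x' => G12 r x' y') x) = fun y' => phi12 r x y' :=
    funext fun y' => deriv_G_x' hr hx y'
  rw [hfun]
  exact (hasDerivAt_phi hr (S12_ne_of_x hr hx y)).deriv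

lemma g12_symm : g12 r x y = g12 r y x := by
  unfold g12
  ring_nf

lemma g12_cont (hr : r ≠ 0) (hx : x ∈ Icc (0:ℝ) 1) : Continuous fun y => g12 r x y := by
  unfold g12
  apply Continuous.div (by fun_prop) (by fun_prop)
  intro y
  apply pow_ne_zero
  rw [D_eq]
  exact mul_ne_zero (Real.exp_ne_zero _) (S12_ne_of_x hr hx y)


lemma key_lintegral (hr : r ≠ 0) (hx : x ∈ Icc (0:ℝ) 1) :
    ∫⁻ y, (Icc (0:ℝ) 1).indicator (fun y => ENNReal.ofReal (g12 r x y)) y = 1 := by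
  rw [lintegral_indicator measurableSet_Icc]
  have hcont := g12_cont hr hx
  have hInt : IntegrableOn (fun y => g12 r x y) (Icc (0:ℝ) 1) :=
    hcont.integrableOn_Icc
  have hval : ∫ y in (0:ℝ)..1, g12 r x y = 1 := by
    rw [intervalIntegral.integral_eq_sub_of_hasDerivAt
      (f := fun y => phi12 r x y) (fun y _ => hasDerivAt_phi hr (S12_ne_of_x hr hx y))
      (hcont.intervalIntegrable 0 1)]
    rw [phi12_1 hr (Real.exp_ne_zero _), phi12_0]
    norm_num
  have h2 : ∫ y in Icc (0:ℝ) 1, g12 r x y = 1 := by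
    rw [MeasureTheory.integral_Icc_eq_integral_Ioc,
      ← intervalIntegral.integral_of_le (by norm_num : (0:ℝ) ≤ 1)]
    exact hval
  rw [← ofReal_integral_eq_lintegral_ofReal hInt
    (Filter.Eventually.of_forall fun y => g12_nonneg), h2]
  norm_num

lemma g12_measurable : Measurable fun p : ℝ × ℝ => ENNReal.ofReal (g12 r p.1 p.2) := by
  apply Measurable.ennreal_ofReal
  unfold g12
  fun_prop

lemma fden_eval (x y : ℝ) :
    (Icc (0:ℝ) 1 ×ˢ Icc (0:ℝ) 1).indicator (fun p => ENNReal.ofReal (g12 r p.1 p.2)) (x, y)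
      = (Icc (0:ℝ) 1).indicator
          (fun x => (Icc (0:ℝ) 1).indicator (fun y => ENNReal.ofReal (g12 r x y)) y) x := by
  simp only [Set.indicator_apply, Set.mem_prod]
  by_cases hx : x ∈ Icc (0:ℝ) 1 <;> by_cases hy : y ∈ Icc (0:ℝ) 1 <;> simp [hx, hy]

lemma marginals (hr : r ≠ 0) :
    (volume.withDensity
        ((Icc (0 : ℝ) 1 ×ˢ Icc (0 : ℝ) 1).indicator
          fun p => ENNReal.ofReal (g12 r p.1 p.2))).map Prod.fst
      = volume.restrict (Icc (0 : ℝ) 1) ∧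
    (volume.withDensity
        ((Icc (0 : ℝ) 1 ×ˢ Icc (0 : ℝ) 1).indicator
          fun p => ENNReal.ofReal (g12 r p.1 p.2))).map Prod.snd
      = volume.restrict (Icc (0 : ℝ) 1) := by
  set f : ℝ × ℝ → ℝ≥0∞ := (Icc (0 : ℝ) 1 ×ˢ Icc (0 : ℝ) 1).indicator
      fun p => ENNReal.ofReal (g12 r p.1 p.2) with hf
  have hfm : Measurable f :=
    g12_measurable.indicator (measurableSet_Icc.prod measurableSet_Icc)
  constructor
  · ext s hs
    rw [Measure.map_apply measurable_fst hs,
      withDensity_apply _ (hs.preimage measurable_fst)]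
    have hpre : (Prod.fst ⁻¹' s : Set (ℝ × ℝ)) = s ×ˢ (univ : Set ℝ) := by
      ext p; simp
    rw [hpre, MeasureTheory.Measure.volume_eq_prod ℝ ℝ,
      show ((volume : Measure ℝ).prod volume).restrict (s ×ˢ univ)
          = (volume.restrict s).prod (volume.restrict univ) from
        (Measure.prod_restrict _ _).symm,
      Measure.restrict_univ, MeasureTheory.lintegral_prod _ hfm.aemeasurable]
    have hinner : ∀ x, (∫⁻ y, f (x, y)) =
        (Icc (0:ℝ) 1).indicator (fun _ => (1:ℝ≥0∞)) x := by
      intro x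
      by_cases hx : x ∈ Icc (0:ℝ) 1
      · simp only [hf, fden_eval, Set.indicator_of_mem hx]
        exact key_lintegral hr hx
      · simp only [hf, fden_eval, Set.indicator_of_notMem hx]
        simp
    simp only [hinner]
    rw [lintegral_indicator measurableSet_Icc, setLIntegral_one,
      Measure.restrict_apply measurableSet_Icc, Measure.restrict_apply hs, Set.inter_comm]
  · ext s hs
    rw [Measure.map_apply measurable_snd hs,
      withDensity_apply _ (hs.preimage measurable_snd)]
    have hpre : (Prod.snd ⁻¹' s : Set (ℝ × ℝ)) = (univ : Set ℝ) ×ˢ s := by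
      ext p; simp
    rw [hpre, MeasureTheory.Measure.volume_eq_prod ℝ ℝ,
      show ((volume : Measure ℝ).prod volume).restrict (univ ×ˢ s)
          = (volume.restrict univ).prod (volume.restrict s) from
        (Measure.prod_restrict _ _).symm,
      Measure.restrict_univ, MeasureTheory.lintegral_prod_symm _ hfm.aemeasurable]
    have hinner : ∀ y, (∫⁻ x, f (x, y)) =
        (Icc (0:ℝ) 1).indicator (fun _ => (1:ℝ≥0∞)) y := by
      intro y
      by_cases hy : y ∈ Icc (0:ℝ) 1
      · have heval : ∀ x, f (x, y)
            = (Icc (0:ℝ) 1).indicator (fun x => ENNReal.ofReal (g12 r y x)) x := by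
          intro x
          rw [hf, fden_eval]
          by_cases hx : x ∈ Icc (0:ℝ) 1
          · rw [Set.indicator_of_mem hx, Set.indicator_of_mem hy, Set.indicator_of_mem hx,
              g12_symm]
          · rw [Set.indicator_of_notMem hx, Set.indicator_of_notMem hx]
        rw [Set.indicator_of_mem hy]
        simp only [heval]
        exact key_lintegral hr hy
      · have heval : ∀ x, f (x, y) = 0 := by
          intro x
          rw [hf, fden_eval]
          by_cases hx : x ∈ Icc (0:ℝ) 1 <;> simp [Set.indicator_apply, hx, hy]
        simp [heval, hy]
    simp only [hinner]
    rw [lintegral_indicator measurableSet_Icc, setLIntegral_one,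
      Measure.restrict_apply measurableSet_Icc, Measure.restrict_apply hs, Set.inter_comm]

end G12Aux

/-- For `r ≠ 0`: (i) `G(x,0) = 0`, `G(0,y) = 0`, `G(x,1) = x`,
`G(1,y) = y`; (ii) `∂²G/∂x∂y = g` with `g > 0` on `(0,1)²`; (iii) `G` satisfies
`∂G/∂x = (1 - e^{-rG})/(1 - e^{-rx})`. Consequently the measure with density `g` on
`[0,1]²` is a permuton. -/
theorem G12_properties (r : ℝ) (hr : r ≠ 0) :
    (∀ x ∈ Icc (0 : ℝ) 1, G12 r x 0 = 0 ∧ G12 r x 1 = x) ∧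
      (∀ y ∈ Icc (0 : ℝ) 1, G12 r 0 y = 0 ∧ G12 r 1 y = y) ∧
      (∀ x ∈ Icc (0 : ℝ) 1, ∀ y ∈ Icc (0 : ℝ) 1,
        deriv (fun y' => deriv (fun x' => G12 r x' y') x) y = g12 r x y) ∧
      (∀ x ∈ Ioo (0 : ℝ) 1, ∀ y ∈ Ioo (0 : ℝ) 1, 0 < g12 r x y) ∧
      (∀ x ∈ Ioc (0 : ℝ) 1, ∀ y ∈ Icc (0 : ℝ) 1,
        deriv (fun x' => G12 r x' y) x =
          (1 - Real.exp (-r * G12 r x y)) / (1 - Real.exp (-r * x))) ∧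
      IsPermuton (volume.withDensity
        ((Icc (0 : ℝ) 1 ×ˢ Icc (0 : ℝ) 1).indicator
          fun p => ENNReal.ofReal (g12 r p.1 p.2))) := by
  refine ⟨fun x hx => ⟨G12_x0, G12_x1 hr⟩,
    fun y hy => ⟨by rw [G12_symm]; exact G12_x0, by rw [G12_symm]; exact G12_x1 hr⟩,
    fun x hx y hy => part2 hr hx y,
    fun x hx y hy => g12_pos hr (S12_ne_of_x hr (Ioo_subset_Icc_self hx) y),
    fun x hx y hy => part3 hr hx hy, ?_, (marginals hr).1, (marginals hr).2⟩
  constructor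
  have h := (marginals hr).1
  set mu := volume.withDensity
      ((Icc (0 : ℝ) 1 ×ˢ Icc (0 : ℝ) 1).indicator
        fun p => ENNReal.ofReal (g12 r p.1 p.2)) with hmu
  have h2 : mu Set.univ = (mu.map Prod.fst) Set.univ := by
    rw [Measure.map_apply measurable_fst MeasurableSet.univ, Set.preimage_univ]
  rw [h2, h, Measure.restrict_apply_univ, Real.volume_Icc]
  norm_num
end

section
/- Let r ≠ 0 be real and let g(x,y) = r(1−e^{−r}) / (e^{r(1−x−y)/2} − e^{r(x−y−1)/2} − e^{r(y−x−1)/2} + e^{r(x+y−1)/2})² on (0,1)². Then g satisfies the Euler–Lagrange partial differential equation (∂²/∂x∂y) log g(x,y) + 2 r g(x,y) = 0 for all (x,y) ∈ (0,1)². -/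
open MeasureTheory Real Set Filter
open scoped Classical ENNReal

noncomputable def Dfn (r x y : ℝ) : ℝ :=
  Real.exp (r * (1 - x - y) / 2) - Real.exp (r * (x - y - 1) / 2) -
    Real.exp (r * (y - x - 1) / 2) + Real.exp (r * (x + y - 1) / 2)

noncomputable def Gfn (r x y : ℝ) : ℝ :=
  Real.exp (r * (1 - x - y) / 2) * (-(r/2)) - Real.exp (r * (x - y - 1) / 2) * (r/2) -
    Real.exp (r * (y - x - 1) / 2) * (-(r/2)) + Real.exp (r * (x + y - 1) / 2) * (r/2)

private lemma hlin (a b x : ℝ) (f : ℝ → ℝ) (hf : ∀ s, f s = a * s + b) :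
    HasDerivAt f a x := by
  have hfe : f = fun s => a * s + b := funext hf
  rw [hfe]
  simpa using ((hasDerivAt_id x).const_mul a).add_const b

private lemma hasDerivAt_D_fst (r y x : ℝ) :
    HasDerivAt (fun x' => Dfn r x' y) (Gfn r x y) x := by
  have l1 : HasDerivAt (fun s : ℝ => r * (1 - s - y) / 2) (-(r/2)) x :=
    hlin (-(r/2)) (r*(1-y)/2) x _ (fun s => by ring)
  have l2 : HasDerivAt (fun s : ℝ => r * (s - y - 1) / 2) (r/2) x :=
    hlin (r/2) (r*(-y-1)/2) x _ (fun s => by ring)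
  have l3 : HasDerivAt (fun s : ℝ => r * (y - s - 1) / 2) (-(r/2)) x :=
    hlin (-(r/2)) (r*(y-1)/2) x _ (fun s => by ring)
  have l4 : HasDerivAt (fun s : ℝ => r * (s + y - 1) / 2) (r/2) x :=
    hlin (r/2) (r*(y-1)/2) x _ (fun s => by ring)
  exact ((l1.exp.sub l2.exp).sub l3.exp).add l4.exp

private lemma hasDerivAt_D_snd (r x y : ℝ) :
    HasDerivAt (fun y' => Dfn r x y')
      (Real.exp (r * (1 - x - y) / 2) * (-(r/2)) - Real.exp (r * (x - y - 1) / 2) * (-(r/2)) -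
        Real.exp (r * (y - x - 1) / 2) * (r/2) + Real.exp (r * (x + y - 1) / 2) * (r/2)) y := by
  have l1 : HasDerivAt (fun s : ℝ => r * (1 - x - s) / 2) (-(r/2)) y :=
    hlin (-(r/2)) (r*(1-x)/2) y _ (fun s => by ring)
  have l2 : HasDerivAt (fun s : ℝ => r * (x - s - 1) / 2) (-(r/2)) y :=
    hlin (-(r/2)) (r*(x-1)/2) y _ (fun s => by ring)
  have l3 : HasDerivAt (fun s : ℝ => r * (s - x - 1) / 2) (r/2) y :=
    hlin (r/2) (r*(-x-1)/2) y _ (fun s => by ring)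
  have l4 : HasDerivAt (fun s : ℝ => r * (x + s - 1) / 2) (r/2) y :=
    hlin (r/2) (r*(x-1)/2) y _ (fun s => by ring)
  exact ((l1.exp.sub l2.exp).sub l3.exp).add l4.exp

private lemma hasDerivAt_G_snd (r x y : ℝ) :
    HasDerivAt (fun y' => Gfn r x y')
      (Real.exp (r * (1 - x - y) / 2) * (-(r/2)) * (-(r/2)) -
        Real.exp (r * (x - y - 1) / 2) * (-(r/2)) * (r/2) -
        Real.exp (r * (y - x - 1) / 2) * (r/2) * (-(r/2)) +
        Real.exp (r * (x + y - 1) / 2) * (r/2) * (r/2)) y := by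
  have l1 : HasDerivAt (fun s : ℝ => r * (1 - x - s) / 2) (-(r/2)) y :=
    hlin (-(r/2)) (r*(1-x)/2) y _ (fun s => by ring)
  have l2 : HasDerivAt (fun s : ℝ => r * (x - s - 1) / 2) (-(r/2)) y :=
    hlin (-(r/2)) (r*(x-1)/2) y _ (fun s => by ring)
  have l3 : HasDerivAt (fun s : ℝ => r * (s - x - 1) / 2) (r/2) y :=
    hlin (r/2) (r*(-x-1)/2) y _ (fun s => by ring)
  have l4 : HasDerivAt (fun s : ℝ => r * (x + s - 1) / 2) (r/2) y :=
    hlin (r/2) (r*(x-1)/2) y _ (fun s => by ring)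
  exact (((l1.exp.mul_const (-(r/2))).sub (l2.exp.mul_const (r/2))).sub
    (l3.exp.mul_const (-(r/2)))).add (l4.exp.mul_const (r/2))

private lemma Dfn_ne (r x y : ℝ) (hr : r ≠ 0) (hx0 : 0 < x) (hx1 : x < 1) :
    Dfn r x y ≠ 0 := by
  rcases hr.lt_or_gt with h | h
  · have h1 : Real.exp (r * (1 - x - y) / 2) < Real.exp (r * (x - y - 1) / 2) :=
      Real.exp_lt_exp.mpr (by nlinarith [mul_neg_of_neg_of_pos h (by linarith : (0:ℝ) < 1 - x)])
    have h2 : Real.exp (r * (x + y - 1) / 2) < Real.exp (r * (y - x - 1) / 2) :=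
      Real.exp_lt_exp.mpr (by nlinarith [mul_neg_of_neg_of_pos h hx0])
    have : Dfn r x y < 0 := by unfold Dfn; linarith
    exact this.ne
  · have h1 : Real.exp (r * (x - y - 1) / 2) < Real.exp (r * (1 - x - y) / 2) :=
      Real.exp_lt_exp.mpr (by nlinarith [mul_pos h (by linarith : (0:ℝ) < 1 - x)])
    have h2 : Real.exp (r * (y - x - 1) / 2) < Real.exp (r * (x + y - 1) / 2) :=
      Real.exp_lt_exp.mpr (by nlinarith [mul_pos h hx0])
    have : 0 < Dfn r x y := by unfold Dfn; linarith
    exact this.ne'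

/-- The density `g` of the entropy-maximizing permuton with fixed
`12`-pattern density satisfies the Euler–Lagrange PDE `(log g)_{xy} + 2 r g = 0`
on `(0,1)²` (the Lagrange multiplier being `α = r`). -/
theorem g12_satisfies_EulerLagrange (r : ℝ) (hr : r ≠ 0) (x y : ℝ)
    (hx : x ∈ Ioo (0 : ℝ) 1) (hy : y ∈ Ioo (0 : ℝ) 1) :
    deriv (fun y' => deriv (fun x' => Real.log (g12 r x' y')) x) y
        + 2 * r * g12 r x y = 0 := by
  obtain ⟨hx0, hx1⟩ := hx
  have hc : r * (1 - Real.exp (-r)) ≠ 0 := by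
    refine mul_ne_zero hr (sub_ne_zero.mpr fun h => hr ?_)
    have : Real.exp (-r) = Real.exp 0 := by rw [Real.exp_zero, ← h]
    have := Real.exp_injective this
    linarith
  have key : ∀ y' : ℝ, deriv (fun x' => Real.log (g12 r x' y')) x
      = -2 * Gfn r x y' / Dfn r x y' := by
    intro y'
    have hDne := Dfn_ne r x y' hr hx0 hx1
    have hpow := (hasDerivAt_D_fst r y' x).pow 2
    have hg : HasDerivAt (fun x' => g12 r x' y')
        ((0 * Dfn r x y' ^ 2 - r * (1 - Real.exp (-r)) *
          ((2 : ℕ) * Dfn r x y' ^ (2 - 1) * Gfn r x y')) / (Dfn r x y' ^ 2) ^ 2) x :=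
      (hasDerivAt_const x (r * (1 - Real.exp (-r)))).div hpow (pow_ne_zero 2 hDne)
    have hgx : g12 r x y' = r * (1 - Real.exp (-r)) / (Dfn r x y') ^ 2 := rfl
    have hgne : g12 r x y' ≠ 0 := by
      rw [hgx]; exact div_ne_zero hc (pow_ne_zero 2 hDne)
    have hlog := hg.log hgne
    rw [hlog.deriv, hgx]
    norm_num
    have h1e : 1 - Real.exp (-r) ≠ 0 := right_ne_zero_of_mul hc
    field_simp
  have hfun : (fun y' => deriv (fun x' => Real.log (g12 r x' y')) x)
      = fun y' => -2 * Gfn r x y' / Dfn r x y' := funext key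
  rw [hfun]
  have hDne := Dfn_ne r x y hr hx0 hx1
  have hdiv := ((hasDerivAt_G_snd r x y).const_mul (-2 : ℝ)).div
    (hasDerivAt_D_snd r x y) hDne
  rw [show (fun y' => -2 * Gfn r x y' / Dfn r x y') = ((fun y => -2 * Gfn r x y) / fun y' => Dfn r x y') from rfl, hdiv.deriv]
  have hgx : g12 r x y = r * (1 - Real.exp (-r)) / (Dfn r x y) ^ 2 := rfl
  rw [hgx]
  have hAF : Real.exp (r * (1 - x - y) / 2) * Real.exp (r * (x + y - 1) / 2) = 1 := by
    rw [← Real.exp_add, show r * (1 - x - y) / 2 + r * (x + y - 1) / 2 = 0 by ring,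
      Real.exp_zero]
  have hBC : Real.exp (r * (x - y - 1) / 2) * Real.exp (r * (y - x - 1) / 2)
      = Real.exp (-r) := by
    rw [← Real.exp_add]; congr 1; ring
  rw [show 2 * r * (r * (1 - Real.exp (-r)) / Dfn r x y ^ 2)
      = (2 * r * (r * (1 - Real.exp (-r)))) / Dfn r x y ^ 2 by ring, ← add_div,
    div_eq_zero_iff]
  left
  unfold Gfn Dfn
  linear_combination (-2*r^2) * hAF + (2*r^2) * hBC
end

section
/- For every n ≥ 1, the joint generating function identity Σ_{π ∈ S_n} x^{k₁(π)} y^{k₂(π)} = Π_{j=1}^{n} ( Σ_{i=0}^{j−1} x^{i} y^{i(i−1)/2} ) holds in the polynomial ring ℤ[x,y], where k₁(π) = #{(a,b) : 1 ≤ a < b ≤ n, π(a) < π(b)} is the number of occurrences of the pattern 1 2 in π, and k₂(π) = #{(a,b,c) : 1 ≤ a < b < c ≤ n, π(c) > π(a) and π(c) > π(b)} is the number of occurrences of patterns of the form **3 (i.e., patterns 123 or 213). -/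
open scoped BigOperators

/-- The number of occurrences `k₁(π)` of the pattern `12` in `π ∈ S_n`:
pairs of positions `a < b` with `π(a) < π(b)`. -/
def count12 (n : ℕ) (σp : Equiv.Perm (Fin n)) : ℕ :=
  (Finset.univ.filter fun q : Fin n × Fin n => q.1 < q.2 ∧ σp q.1 < σp q.2).card

/-- The number of occurrences `k₂(π)` of patterns of the form `**3` (i.e. `123` or `213`)
in `π ∈ S_n`: triples of positions `a < b < c` with `π(c) > π(a)` and `π(c) > π(b)`. -/
def countStarStar3 (n : ℕ) (σp : Equiv.Perm (Fin n)) : ℕ :=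
  (Finset.univ.filter fun q : Fin n × Fin n × Fin n =>
    q.1 < q.2.1 ∧ q.2.1 < q.2.2 ∧ σp q.1 < σp q.2.2 ∧ σp q.2.1 < σp q.2.2).card


open Finset
section Aux

def codeSet {n : ℕ} (σ : Equiv.Perm (Fin n)) (j : Fin n) : Finset (Fin n) :=
  Finset.univ.filter fun a => a < j ∧ σ a < σ j

lemma codeSet_card_le {n : ℕ} (σ : Equiv.Perm (Fin n)) (j : Fin n) :
    (codeSet σ j).card ≤ (j : ℕ) := by
  have h : codeSet σ j ⊆ Finset.Iio j := by
    intro a ha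
    simp only [codeSet, mem_filter] at ha
    exact Finset.mem_Iio.mpr ha.2.1
  calc (codeSet σ j).card ≤ (Finset.Iio j).card := Finset.card_le_card h
    _ = (j : ℕ) := by simp

def code {n : ℕ} (σ : Equiv.Perm (Fin n)) (j : Fin n) : Fin ((j : ℕ) + 1) :=
  ⟨(codeSet σ j).card, Nat.lt_succ_of_le (codeSet_card_le σ j)⟩

lemma code_inj {n : ℕ} (σ τ : Equiv.Perm (Fin n))
    (h : ∀ j : Fin n, (codeSet σ j).card = (codeSet τ j).card) : σ = τ := by
  have key : ∀ j : Fin n, σ j = τ j := by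
    have wf : WellFounded ((· > ·) : Fin n → Fin n → Prop) := IsWellFounded.wf
    intro j
    refine wf.induction (C := fun j => σ j = τ j) j ?_
    intro j IH
    have hs1 : ∀ t, j < τ.symm t → σ.symm t = τ.symm t := by
      intro t ht
      have h1 : σ (τ.symm t) = τ (τ.symm t) := IH _ ht
      rw [Equiv.apply_symm_apply] at h1
      exact (Equiv.symm_apply_eq σ).mpr h1.symm
    have hs2 : ∀ t, j < σ.symm t → τ.symm t = σ.symm t := by
      intro t ht
      have h1 : σ (σ.symm t) = τ (σ.symm t) := IH _ ht
      rw [Equiv.apply_symm_apply] at h1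
      exact (Equiv.symm_apply_eq τ).mpr h1
    have hT : ∀ t : Fin n, σ.symm t ≤ j ↔ τ.symm t ≤ j := by
      intro t
      constructor
      · intro h1
        by_contra hc
        push_neg at hc
        rw [hs1 t hc] at h1
        exact absurd h1 (not_le.mpr hc)
      · intro h1
        by_contra hc
        push_neg at hc
        rw [hs2 t hc] at h1
        exact absurd h1 (not_le.mpr hc)
    set T : Finset (Fin n) := Finset.univ.filter fun t => σ.symm t ≤ j with hTdef
    have memT : ∀ t, t ∈ T ↔ σ.symm t ≤ j := by
      intro t; simp [hTdef]
    have hmemσ : σ j ∈ T := by rw [memT]; simp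
    have hmemτ : τ j ∈ T := by rw [memT, hT]; simp
    have hcard : ∀ (ρ : Equiv.Perm (Fin n)), (∀ t, t ∈ T ↔ ρ.symm t ≤ j) →
        (codeSet ρ j).card = (T.filter (· < ρ j)).card := by
      intro ρ hρ
      refine Finset.card_bij (fun a _ => ρ a) ?_ ?_ ?_
      · intro a ha
        simp only [codeSet, mem_filter, mem_univ, true_and] at ha
        simp only [mem_filter]
        refine ⟨(hρ _).mpr (by simp [le_of_lt ha.1]), ha.2⟩
      · intro a _ b _ hab
        exact ρ.injective hab
      · intro t ht
        simp only [mem_filter] at ht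
        have h1 : ρ.symm t ≤ j := (hρ _).mp ht.1
        have h2 : ρ.symm t ≠ j := by
          intro hc
          have : t = ρ j := by rw [← hc, Equiv.apply_symm_apply]
          rw [this] at ht
          exact lt_irrefl _ ht.2
        refine ⟨ρ.symm t, ?_, by simp⟩
        simp only [codeSet, mem_filter, mem_univ, true_and]
        exact ⟨lt_of_le_of_ne h1 h2, by rw [Equiv.apply_symm_apply]; exact ht.2⟩
    have hc1 := hcard σ memT
    have hc2 := hcard τ (fun t => by rw [memT, hT])
    have heq : (T.filter (· < σ j)).card = (T.filter (· < τ j)).card := by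
      rw [← hc1, ← hc2, h j]
    have hmono : ∀ u v : Fin n, u ∈ T → u < v →
        (T.filter (· < u)).card < (T.filter (· < v)).card := by
      intro u v hu huv
      refine Finset.card_lt_card ?_
      rw [Finset.ssubset_iff_of_subset]
      · exact ⟨u, by simp [hu, huv], by simp⟩
      · intro x hx
        simp only [mem_filter] at hx ⊢
        exact ⟨hx.1, lt_trans hx.2 huv⟩
    rcases lt_trichotomy (σ j) (τ j) with hlt | heq' | hgt
    · exact absurd heq (ne_of_lt (hmono _ _ hmemσ hlt))
    · exact heq'
    · exact absurd heq.symm (ne_of_lt (hmono _ _ hmemτ hgt))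
  exact Equiv.ext key

lemma code_bijective {n : ℕ} :
    Function.Bijective (fun σ : Equiv.Perm (Fin n) => code σ) := by
  rw [Fintype.bijective_iff_injective_and_card]
  constructor
  · intro σ τ hστ
    apply code_inj
    intro j
    exact congrArg Fin.val (congrFun hστ j)
  · rw [Fintype.card_perm, Fintype.card_pi, Fintype.card_fin]
    simp only [Fintype.card_fin]
    rw [Fin.prod_univ_eq_prod_range (fun j => j + 1) n,
      Finset.prod_range_add_one_eq_factorial]

end Aux

lemma count12_eq {n : ℕ} (σ : Equiv.Perm (Fin n)) :
    count12 n σ = ∑ j : Fin n, (codeSet σ j).card := by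
  unfold count12
  rw [Finset.card_eq_sum_card_fiberwise (f := Prod.snd) (t := Finset.univ)
    (fun x _ => mem_univ _)]
  refine Finset.sum_congr rfl fun j _ => ?_
  refine Finset.card_bij (fun q _ => q.1) ?_ ?_ ?_
  · intro q hq
    simp only [mem_filter, mem_univ, true_and] at hq
    obtain ⟨⟨h1, h2⟩, h3⟩ := hq
    subst h3
    simp only [codeSet, mem_filter, mem_univ, true_and]
    exact ⟨h1, h2⟩
  · intro q hq r hr hqr
    simp only [mem_filter] at hq hr
    exact Prod.ext hqr (hq.2.trans hr.2.symm)
  · intro a ha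
    simp only [codeSet, mem_filter, mem_univ, true_and] at ha
    exact ⟨(a, j), by simp [ha.1, ha.2], rfl⟩

lemma card_lt_pairs {α : Type*} [LinearOrder α] [Fintype α] (s : Finset α) :
    (Finset.univ.filter fun q : α × α => q.1 ∈ s ∧ q.2 ∈ s ∧ q.1 < q.2).card =
      s.card.choose 2 := by
  classical
  set L := Finset.univ.filter fun q : α × α => q.1 ∈ s ∧ q.2 ∈ s ∧ q.1 < q.2 with hL
  set G := Finset.univ.filter fun q : α × α => q.1 ∈ s ∧ q.2 ∈ s ∧ q.2 < q.1 with hG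
  have hGL : G = L.image Prod.swap := by
    ext ⟨a, b⟩
    simp only [hL, hG, mem_image, mem_filter, mem_univ, true_and, Prod.exists]
    constructor
    · rintro ⟨h1, h2, h3⟩
      exact ⟨b, a, ⟨h2, h1, h3⟩, rfl⟩
    · rintro ⟨c, d, ⟨h1, h2, h3⟩, he⟩
      have he' : d = a ∧ c = b := Prod.mk.injEq .. ▸ he
      obtain ⟨rfl, rfl⟩ := he'
      exact ⟨h2, h1, h3⟩
  have hcardLG : L.card = G.card := by
    rw [hGL, Finset.card_image_of_injective _ Prod.swap_injective]
  have hunion : L ∪ G = s.offDiag := by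
    ext ⟨a, b⟩
    simp only [hL, hG, mem_union, mem_filter, mem_univ, true_and, Finset.mem_offDiag]
    constructor
    · rintro (⟨h1, h2, h3⟩ | ⟨h1, h2, h3⟩)
      · exact ⟨h1, h2, ne_of_lt h3⟩
      · exact ⟨h1, h2, (ne_of_lt h3).symm⟩
    · rintro ⟨h1, h2, h3⟩
      rcases lt_or_gt_of_ne h3 with h | h
      · exact Or.inl ⟨h1, h2, h⟩
      · exact Or.inr ⟨h1, h2, h⟩
  have hdisj : Disjoint L G := by
    rw [Finset.disjoint_left]
    rintro ⟨a, b⟩ ha hb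
    simp only [hL, hG, mem_filter, mem_univ, true_and] at ha hb
    exact absurd (ha.2.2.trans hb.2.2) (lt_irrefl _)
  have hsum : L.card + G.card = s.card * s.card - s.card := by
    rw [← Finset.card_union_of_disjoint hdisj, hunion, Finset.offDiag_card]
  rw [← hcardLG] at hsum
  have hprod : s.card * s.card - s.card = s.card * (s.card - 1) := by
    cases s.card with
    | zero => rfl
    | succ m => simp [Nat.mul_sub, Nat.succ_sub_one, Nat.mul_succ, Nat.mul_one]
  rw [hprod] at hsum
  rw [Nat.choose_two_right]
  omega

lemma countSS3_eq {n : ℕ} (σ : Equiv.Perm (Fin n)) :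
    countStarStar3 n σ = ∑ j : Fin n, ((codeSet σ j).card).choose 2 := by
  unfold countStarStar3
  rw [Finset.card_eq_sum_card_fiberwise (f := fun q => q.2.2) (t := Finset.univ)
    (fun x _ => mem_univ _)]
  refine Finset.sum_congr rfl fun j _ => ?_
  rw [← card_lt_pairs (codeSet σ j)]
  refine Finset.card_bij (fun q _ => (q.1, q.2.1)) ?_ ?_ ?_
  · rintro ⟨a, b, c⟩ hq
    simp only [mem_filter, mem_univ, true_and] at hq
    obtain ⟨⟨h1, h2, h3, h4⟩, h5⟩ := hq
    subst h5
    simp only [codeSet, mem_filter, mem_univ, true_and]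
    exact ⟨⟨lt_trans h1 h2, h3⟩, ⟨h2, h4⟩, h1⟩
  · rintro ⟨a, b, c⟩ hq ⟨a', b', c'⟩ hr hqr
    simp only [mem_filter] at hq hr
    simp only [Prod.mk.injEq] at hqr
    have hc : c = j := hq.2
    have hc' : c' = j := hr.2
    simp only [Prod.mk.injEq]
    exact ⟨hqr.1, hqr.2, hc.trans hc'.symm⟩
  · rintro ⟨a, b⟩ hab
    simp only [codeSet, mem_filter, mem_univ, true_and] at hab
    obtain ⟨⟨_, h2⟩, ⟨h3, h4⟩, h5⟩ := hab
    exact ⟨(a, b, j), by simp [h5, h3, h2, h4], rfl⟩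


set_option maxHeartbeats 1000000 in
/-- The joint generating function identity
`Σ_{π ∈ S_n} x^{k₁(π)} y^{k₂(π)} = Π_{j=1}^{n} Σ_{i=0}^{j-1} x^i y^{i(i-1)/2}`
in `ℤ[x,y]`, where `x = X 0` and `y = X 1`. -/
theorem generating_function_12_starstar3 (n : ℕ) (hn : 1 ≤ n) :
    ∑ σp : Equiv.Perm (Fin n),
        (MvPolynomial.X 0 : MvPolynomial (Fin 2) ℤ) ^ count12 n σp *
          (MvPolynomial.X 1) ^ countStarStar3 n σp =
      ∏ j ∈ Finset.range n, ∑ i ∈ Finset.range (j + 1),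
        (MvPolynomial.X 0 : MvPolynomial (Fin 2) ℤ) ^ i *
          (MvPolynomial.X 1) ^ (i * (i - 1) / 2) := by
  classical
  set x : MvPolynomial (Fin 2) ℤ := MvPolynomial.X 0 with hx
  set y : MvPolynomial (Fin 2) ℤ := MvPolynomial.X 1 with hy
  have step1 : ∀ σ : Equiv.Perm (Fin n),
      x ^ count12 n σ * y ^ countStarStar3 n σ =
        ∏ j : Fin n, (x ^ ((code σ j : ℕ)) * y ^ ((code σ j : ℕ)).choose 2) := by
    intro σ
    have hcv : ∀ j : Fin n, ((code σ j : ℕ)) = (codeSet σ j).card := fun _ => rfl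
    simp only [hcv]
    rw [count12_eq, countSS3_eq, Finset.prod_mul_distrib,
      Finset.prod_pow_eq_pow_sum, Finset.prod_pow_eq_pow_sum]
  calc ∑ σ : Equiv.Perm (Fin n), x ^ count12 n σ * y ^ countStarStar3 n σ
      = ∑ σ : Equiv.Perm (Fin n),
          ∏ j : Fin n, (x ^ ((code σ j : ℕ)) * y ^ ((code σ j : ℕ)).choose 2) :=
        Finset.sum_congr rfl fun σ _ => step1 σ
    _ = ∑ f : (∀ j : Fin n, Fin ((j : ℕ) + 1)),
          ∏ j : Fin n, (x ^ ((f j : ℕ)) * y ^ ((f j : ℕ)).choose 2) :=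
        code_bijective.sum_comp
          (fun f => ∏ j : Fin n, (x ^ ((f j : ℕ)) * y ^ ((f j : ℕ)).choose 2))
    _ = ∏ j : Fin n, ∑ i : Fin ((j : ℕ) + 1), (x ^ (i : ℕ) * y ^ ((i : ℕ)).choose 2) := by
        rw [Finset.prod_univ_sum]
        rw [Fintype.piFinset_univ]
    _ = ∏ j : Fin n, ∑ i ∈ Finset.range ((j : ℕ) + 1), (x ^ i * y ^ (i * (i - 1) / 2)) := by
        refine Finset.prod_congr rfl fun j _ => ?_
        rw [Fin.sum_univ_eq_sum_range (fun i => x ^ i * y ^ (i.choose 2)) ((j : ℕ) + 1)]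
        exact Finset.sum_congr rfl fun i _ => by rw [Nat.choose_two_right]
    _ = ∏ j ∈ Finset.range n, ∑ i ∈ Finset.range (j + 1), (x ^ i * y ^ (i * (i - 1) / 2)) :=
        Fin.prod_univ_eq_prod_range
          (fun j => ∑ i ∈ Finset.range (j + 1), (x ^ i * y ^ (i * (i - 1) / 2))) n
end
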